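/- arXiv:1706.03523 — 7 statements merged into one kernel-verified Lean document; each statement's English description precedes it below -/
import Mathlib

section
/- If (x_n) is a nonincreasing summable sequence of positive reals such that x_n ≤ Σ_{i>n} x_i for all n, then the achievement set E(x_n) equals the interval [0, Σ_{n=1}^∞ x_n]. -/
def achievementSet (x : ℕ → ℝ) : Set ℝ :=
  {y | ∃ ε : ℕ → Bool, y = ∑' n, if ε n then x n else 0}

noncomputable def greedy (x : ℕ → ℝ) (y : ℝ) : ℕ → ℝ
  | 0 => 0
  | n + 1 => if greedy x y n + x n ≤ y then greedy x y n + x n else greedy x y n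

theorem stmt_4 (x : ℕ → ℝ) (hmono : Antitone x) (hpos : ∀ n, 0 < x n)
    (hsum : Summable x) (hslow : ∀ n, x n ≤ ∑' i, x (n + 1 + i)) :
    achievementSet x = Set.Icc 0 (∑' n, x n) := by
  have hTsum : ∀ n : ℕ, Summable fun i => x (n + i) := by
    intro n
    simpa [add_comm] using (summable_nat_add_iff n).mpr hsum
  have hTrec : ∀ n : ℕ, (∑' i, x (n + i)) = x n + ∑' i, x (n + 1 + i) := by
    intro n
    rw [Summable.tsum_eq_zero_add (hTsum n)]
    simp only [add_zero]
    congr 1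
    exact tsum_congr fun i => by rw [show n + (i + 1) = n + 1 + i from by ring]
  have hT0 : Filter.Tendsto (fun n => ∑' i, x (n + i)) Filter.atTop (nhds 0) := by
    have := tendsto_sum_nat_add x
    simpa [add_comm] using this
  ext y
  simp only [achievementSet, Set.mem_setOf_eq, Set.mem_Icc]
  constructor
  · rintro ⟨ε, rfl⟩
    have hg : Summable fun n => if ε n then x n else 0 := by
      apply Summable.of_nonneg_of_le (fun n => ?_) (fun n => ?_) hsum
      · split <;> [exact (hpos n).le; exact le_rfl]
      · split <;> [exact le_rfl; exact (hpos n).le]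
    constructor
    · exact tsum_nonneg fun n => by split <;> [exact (hpos n).le; exact le_rfl]
    · exact Summable.tsum_le_tsum (fun n => by split <;> [exact le_rfl; exact (hpos n).le]) hg hsum
  · rintro ⟨hy0, hy1⟩
    set S := greedy x y with hS
    set ε : ℕ → Bool := fun n => decide (S n + x n ≤ y) with hε
    have hSsucc : ∀ n, S (n + 1) = if S n + x n ≤ y then S n + x n else S n := fun n => rfl
    have hSsum : ∀ n, S n = ∑ i ∈ Finset.range n, (if ε i then x i else 0) := by
      intro n
      induction n with
      | zero => rfl
      | succ n ih =>
        rw [Finset.sum_range_succ, ← ih, hSsucc, hε]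
        by_cases h : S n + x n ≤ y <;> simp [h]
    have hSle : ∀ n, S n ≤ y := by
      intro n
      induction n with
      | zero => exact hy0
      | succ n ih =>
        rw [hSsucc]
        split <;> assumption
    have hinv : ∀ n, y - S n ≤ ∑' i, x (n + i) := by
      intro n
      induction n with
      | zero =>
        simpa [hS, greedy] using hy1.trans_eq (tsum_congr fun i => by simp)
      | succ n ih =>
        rw [hSsucc]
        by_cases h : S n + x n ≤ y
        · simp only [h, if_true]
          have := hTrec n
          linarith
        · simp only [h, if_false]
          push_neg at h
          have := hslow n
          linarith
    -- S n tends to y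
    have hStendsto : Filter.Tendsto S Filter.atTop (nhds y) := by
      have hlow : Filter.Tendsto (fun n => y - ∑' i, x (n + i)) Filter.atTop (nhds y) := by
        simpa using (tendsto_const_nhds (α := ℕ) (x := y)).sub hT0
      exact tendsto_of_tendsto_of_tendsto_of_le_of_le hlow tendsto_const_nhds
        (fun n => by have := hinv n; linarith) hSle
    have hg : Summable fun n => if ε n then x n else 0 := by
      apply Summable.of_nonneg_of_le (fun n => ?_) (fun n => ?_) hsum
      · split <;> [exact (hpos n).le; exact le_rfl]
      · split <;> [exact le_rfl; exact (hpos n).le]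
    refine ⟨ε, ?_⟩
    have h2 := hg.hasSum.tendsto_sum_nat
    have h3 : Filter.Tendsto (fun n => ∑ i ∈ Finset.range n, (if ε i then x i else 0))
        Filter.atTop (nhds y) := by
      apply hStendsto.congr
      intro n; exact hSsum n
    exact tendsto_nhds_unique h3 h2
end

section
/- First Gap Lemma: Let (x_n) be a nonincreasing summable sequence of positive reals and r_k = Σ_{n=k+1}^∞ x_n. If x_k > r_k, then the open interval (r_k, x_k) is a gap in E(x_n), i.e., r_k ∈ E(x_n), x_k ∈ E(x_n), and (r_k, x_k) ∩ E(x_n) = ∅. -/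
theorem stmt_7 (x : ℕ → ℝ) (hmono : Antitone x) (hpos : ∀ n, 0 < x n)
    (hsum : Summable x) (k : ℕ) (hk : x k > ∑' n, x (k + 1 + n)) :
    (∑' n, x (k + 1 + n)) ∈ achievementSet x ∧ x k ∈ achievementSet x ∧
      Set.Ioo (∑' n, x (k + 1 + n)) (x k) ∩ achievementSet x = ∅ := by
  have hxnn : ∀ n, 0 ≤ x n := fun n => (hpos n).le
  have hfs : ∀ ε : ℕ → Bool, Summable (fun n => if ε n then x n else 0) := by
    intro ε
    apply hsum.of_nonneg_of_le
    · intro n; split <;> simp [hxnn n]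
    · intro n; split <;> simp [hxnn n]
  have hg : Summable (fun n => if k + 1 ≤ n then x n else (0 : ℝ)) := by
    apply hsum.of_nonneg_of_le
    · intro n; split <;> simp [hxnn n]
    · intro n; split <;> simp [hxnn n]
  have hgr : ∑' n, (if k + 1 ≤ n then x n else (0 : ℝ)) = ∑' n, x (k + 1 + n) := by
    rw [← Summable.sum_add_tsum_nat_add (k + 1) hg]
    have h1 : ∑ i ∈ Finset.range (k + 1), (if k + 1 ≤ i then x i else (0 : ℝ)) = 0 := by
      apply Finset.sum_eq_zero
      intro i hi
      simp only [Finset.mem_range] at hi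
      rw [if_neg (by omega)]
    rw [h1, zero_add]
    apply tsum_congr
    intro n
    rw [if_pos (by omega), add_comm n (k + 1)]
  refine ⟨?_, ?_, ?_⟩
  · exact ⟨fun n => decide (k + 1 ≤ n), by simp only [decide_eq_true_eq]; rw [hgr]⟩
  · refine ⟨fun n => decide (n = k), ?_⟩
    have : (fun n => if decide (n = k) then x n else 0) = fun n => if n = k then x k else 0 := by
      funext n
      simp only [decide_eq_true_eq]
      split
      · next h => rw [h]
      · rfl
    rw [this, tsum_ite_eq]
  · ext y
    simp only [Set.mem_inter_iff, Set.mem_Ioo, Set.mem_empty_iff_false, iff_false, not_and]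
    rintro ⟨hy1, hy2⟩ ⟨ε, rfl⟩
    by_cases h : ∃ n ≤ k, ε n = true
    · obtain ⟨n, hn, hεn⟩ := h
      have hle : x k ≤ ∑' m, if ε m then x m else 0 := by
        calc x k ≤ x n := hmono hn
          _ = (if ε n then x n else 0) := by simp [hεn]
          _ ≤ _ := Summable.le_tsum (hfs ε) n (fun m _ => by split <;> simp [hxnn m])
      linarith
    · push_neg at h
      have hle : ∑' m, (if ε m then x m else 0) ≤ ∑' n, x (k + 1 + n) := by
        rw [← hgr]
        apply Summable.tsum_le_tsum _ (hfs ε) hg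
        intro n
        by_cases hn : k + 1 ≤ n
        · rw [if_pos hn]; split <;> simp [hxnn n]
        · have : ε n = false := by simpa using h n (by omega)
          simp only [this, Bool.false_eq_true, if_false]
          split <;> simp [hxnn n]
      linarith
end

section
/- Second Gap Lemma, part (i): Let (x_n) be a nonincreasing summable sequence of positive reals with x_n → 0, let (a,b) be a gap in E(x_n), and let p = max{n : x_n ≥ b − a}. Then b belongs to F_p = {Σ_{n=1}^p ε_n x_n : ε ∈ {0,1}^p}, i.e., b is a subsum of the first p terms. -/
/-- The set of subsums of the terms `x 0, …, x p` (the "first `p+1` terms",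
i.e. the first `p` terms in the paper's 1-based indexing with max index `p`). -/
def partialSubsums (x : ℕ → ℝ) (p : ℕ) : Set ℝ :=
  {y | ∃ ε : ℕ → Bool, y = ∑ n ∈ Finset.range (p + 1), if ε n then x n else 0}

theorem stmt_8 (x : ℕ → ℝ) (hmono : Antitone x) (hpos : ∀ n, 0 < x n)
    (hsum : Summable x) (hlim : Filter.Tendsto x Filter.atTop (nhds 0))
    (a b : ℝ) (hab : a < b)
    (ha : a ∈ achievementSet x) (hb : b ∈ achievementSet x)
    (hgap : Set.Ioo a b ∩ achievementSet x = ∅)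
    (p : ℕ) (hp : x p ≥ b - a) (hpmax : ∀ n, x n ≥ b - a → n ≤ p) :
    b ∈ partialSubsums x p := by
  obtain ⟨ε, hε⟩ := hb
  set f : ℕ → ℝ := fun n => if ε n then x n else 0 with hf
  have hsf : Summable f := by
    apply hsum.of_nonneg_of_le
    · intro n; by_cases h : ε n <;> simp [f, h, (hpos n).le]
    · intro n; by_cases h : ε n <;> simp [f, h, (hpos n).le]
  have hzero : ∀ k, p < k → ε k = false := by
    intro k hk
    by_contra hne
    have hεk : ε k = true := by simpa using hne
    have hfk : f k = x k := by simp [f, hεk]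
    have hxk : x k < b - a := by
      by_contra h
      exact absurd (hpmax k (le_of_not_gt h)) (not_le.mpr hk)
    have hsplit := Summable.tsum_eq_add_tsum_ite hsf k
    have hg : (b - x k) ∈ achievementSet x := by
      refine ⟨fun n => if n = k then false else ε n, ?_⟩
      have heq : (fun n => if (if n = k then false else ε n) then x n else 0)
          = (fun n => if n = k then 0 else f n) := by
        funext n; by_cases h : n = k <;> simp [f, h]
      rw [heq]
      have : b = x k + ∑' n, if n = k then 0 else f n := by
        rw [hε]; rw [hsplit, hfk]
      linarith
    have hmem : (b - x k) ∈ Set.Ioo a b ∩ achievementSet x := by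
      refine ⟨⟨by linarith, by linarith [hpos k]⟩, hg⟩
    rw [hgap] at hmem
    exact hmem
  refine ⟨ε, ?_⟩
  rw [hε]
  exact tsum_eq_sum (fun k hk => by
    have : p < k := by simpa using Finset.mem_range.not.mp hk
    simp [hzero k this])
end

section
/- Let (x_n) be a nonincreasing summable sequence of positive reals, let (a,b) be a gap in E(x_n), p = max{n : x_n ≥ b−a}, F_p = {f_1 < f_2 < … < f_m} the increasingly enumerated set of subsums of the first p terms, and r_p = Σ_{n>p} x_n. If b = f_j, then a = f_{j−1} + r_p. -/
lemma aux_summable (x : ℕ → ℝ) (hpos : ∀ n, 0 < x n) (hsum : Summable x) (ε : ℕ → Bool) :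
    Summable (fun n => if ε n then x n else 0) := by
  refine Summable.of_nonneg_of_le (fun n => ?_) (fun n => ?_) hsum
  · split
    · exact (hpos n).le
    · exact le_rfl
  · split
    · exact le_rfl
    · exact (hpos n).le

lemma aux_tail_summable (x : ℕ → ℝ) (hsum : Summable x) (k : ℕ) :
    Summable (fun n => x (k + n)) := by
  refine ((summable_nat_add_iff k).2 hsum).congr fun n => congrArg x (by omega)

lemma aux_mem (x : ℕ → ℝ) (hpos : ∀ n, 0 < x n) (hsum : Summable x)
    (p q : ℕ) (δ : ℕ → Bool) :
    (∑ n ∈ Finset.range (p+1), if δ n then x n else 0) + ∑' n, x (p+1+q+n)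
      ∈ achievementSet x := by
  classical
  set ε : ℕ → Bool := fun n => if n ≤ p then δ n else decide (p+1+q ≤ n) with hε
  refine ⟨ε, ?_⟩
  rw [← Summable.sum_add_tsum_nat_add (p+1) (aux_summable x hpos hsum ε)]
  congr 1
  · refine Finset.sum_congr rfl fun n hn => ?_
    have hnp : n ≤ p := by simpa [Nat.lt_succ_iff] using hn
    simp [hε, hnp]
  · -- goal: ∑' n, x (p+1+q+n) = ∑' n, if ε (n+(p+1)) then x (n+(p+1)) else 0
    have h1 : (fun n => if ε (n+(p+1)) then x (n+(p+1)) else 0)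
        = fun n => if q ≤ n then x (n+(p+1)) else 0 := by
      funext n
      have hnp : ¬ (n + (p+1) ≤ p) := by omega
      by_cases hqn : q ≤ n
      · simp [hε, hnp, hqn, show p+1+q ≤ n+(p+1) by omega]
      · simp [hε, hnp, hqn, show ¬ (p+1+q ≤ n+(p+1)) by omega]
    rw [h1]
    have hs : Summable (fun n => if q ≤ n then x (n+(p+1)) else 0) := by
      refine Summable.of_nonneg_of_le (fun n => ?_) (fun n => ?_)
        ((summable_nat_add_iff (p+1)).2 hsum)
      · split
        · exact (hpos _).le
        · exact le_rfl
      · split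
        · exact le_rfl
        · exact (hpos _).le
    rw [← Summable.sum_add_tsum_nat_add q hs]
    have hz : (∑ n ∈ Finset.range q, if q ≤ n then x (n+(p+1)) else 0) = 0 := by
      refine Finset.sum_eq_zero fun n hn => ?_
      simp only [Finset.mem_range] at hn
      simp [show ¬ (q ≤ n) by omega]
    rw [hz, zero_add]
    refine tsum_congr fun n => ?_
    rw [if_pos (show q ≤ n + q by omega)]
    exact congrArg x (by omega)

theorem stmt_9 (x : ℕ → ℝ) (hmono : Antitone x) (hpos : ∀ n, 0 < x n)
    (hsum : Summable x)
    (a b : ℝ) (hab : a < b)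
    (ha : a ∈ achievementSet x) (hb : b ∈ achievementSet x)
    (hgap : Set.Ioo a b ∩ achievementSet x = ∅)
    (p : ℕ) (hp : x p ≥ b - a) (hpmax : ∀ n, x n ≥ b - a → n ≤ p)
    (m : ℕ) (f : Fin m → ℝ) (hf : StrictMono f)
    (hrange : ∀ y, y ∈ partialSubsums x p ↔ ∃ i, f i = y)
    (j : Fin m) (hbj : b = f j) :
    ∃ i : Fin m, (i : ℕ) + 1 = (j : ℕ) ∧ a = f i + ∑' n, x (p + 1 + n) := by
  classical
  -- gap property
  have hgap' : ∀ c, c ∈ achievementSet x → c ≤ a ∨ b ≤ c := by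
    intro c hc
    by_contra h
    push_neg at h
    exact Set.eq_empty_iff_forall_notMem.mp hgap c ⟨⟨h.1, h.2⟩, hc⟩
  have hsmall : ∀ n, p < n → x n < b - a := by
    intro n hn
    by_contra h
    push_neg at h
    exact absurd (hpmax n h) (by omega)
  obtain ⟨ε, hεa⟩ := ha
  -- all tail terms are in the representation of a
  have hεtail : ∀ n, p < n → ε n = true := by
    intro n hn
    by_contra hfalse
    have hεn : ε n = false := by simpa using hfalse
    have key : (fun m => if (Function.update ε n true) m then x m else 0)
        = fun m => (if ε m then x m else 0) + (if m = n then x n else 0) := by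
      funext m
      by_cases hm : m = n
      · subst hm; simp [hεn]
      · simp [Function.update_of_ne hm, hm]
    have hs2 : Summable (fun m : ℕ => if m = n then x n else 0) := by
      refine Summable.of_nonneg_of_le (fun k => ?_) (fun k => ?_) hsum
      · split
        · exact (hpos n).le
        · exact le_rfl
      · split
        · rename_i hk; rw [hk]
        · exact (hpos k).le
    have hmem : a + x n ∈ achievementSet x := by
      refine ⟨Function.update ε n true, ?_⟩
      rw [key, Summable.tsum_add (aux_summable x hpos hsum ε) hs2, ← hεa, tsum_ite_eq]
    have hxn : x n < b - a := hsmall n hn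
    rcases hgap' _ hmem with h | h
    · linarith [hpos n]
    · linarith
  have hsplit := Summable.sum_add_tsum_nat_add (p+1) (aux_summable x hpos hsum ε)
  have htail : (∑' n, if ε (n+(p+1)) then x (n+(p+1)) else 0) = ∑' n, x (p+1+n) := by
    refine tsum_congr fun n => ?_
    rw [hεtail (n+(p+1)) (by omega)]
    simp only [if_true]
    exact congrArg x (by omega)
  rw [htail] at hsplit
  set t := ∑ n ∈ Finset.range (p+1), if ε n then x n else 0 with ht
  have hat : a = t + ∑' n, x (p+1+n) := by rw [hεa, ← hsplit]
  obtain ⟨i, hi⟩ := (hrange t).1 ⟨ε, rfl⟩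
  have hy : Summable (fun n => x (p+1+n)) := aux_tail_summable x hsum (p+1)
  have hrpos : 0 < ∑' n, x (p+1+n) := Summable.tsum_pos hy (fun n => (hpos _).le) 0 (hpos _)
  have hfib : f i < f j := by
    rw [← hbj, hi]
    linarith
  have hij : (i : ℕ) < (j : ℕ) := hf.lt_iff_lt.1 hfib
  have heq : (i : ℕ) + 1 = (j : ℕ) := by
    by_contra hne
    have hlt : (i : ℕ) + 1 < (j : ℕ) := lt_of_le_of_ne hij hne
    set k : Fin m := ⟨(i : ℕ) + 1, lt_trans hlt j.isLt⟩ with hk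
    have hik : f i < f k := hf (by simp [hk, Fin.lt_def])
    have hkj : f k < f j := hf (by simpa [hk, Fin.lt_def] using hlt)
    obtain ⟨δ, hδ⟩ := (hrange (f k)).2 ⟨k, rfl⟩
    have hmemq : ∀ q, f k + ∑' n, x (p+1+q+n) ∈ achievementSet x := by
      intro q
      rw [hδ]
      exact aux_mem x hpos hsum p q δ
    have hfk_r : b ≤ f k + ∑' n, x (p+1+n) := by
      have hm0 := hmemq 0
      have h00 : (∑' n, x (p+1+0+n)) = ∑' n, x (p+1+n) :=
        tsum_congr fun n => congrArg x (by omega)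
      rw [h00] at hm0
      rcases hgap' _ hm0 with h | h
      · linarith
      · exact h
    have h0 : Filter.Tendsto (fun q => ∑' n, x (p+1+q+n)) Filter.atTop (nhds 0) := by
      have h1 := tendsto_sum_nat_add (fun n => x (p+1+n))
      refine h1.congr fun q => tsum_congr fun n => congrArg x (by omega)
    have hbfk : (0:ℝ) < b - f k := by linarith [hkj, hbj ▸ hkj]
    have hP : ∃ q, ∑' n, x (p+1+q+n) < b - f k := by
      exact (Filter.Tendsto.eventually_lt_const hbfk h0).exists
    set Q := Nat.find hP with hQ
    have hspec : ∑' n, x (p+1+Q+n) < b - f k := Nat.find_spec hP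
    have hQ0 : Q ≠ 0 := by
      intro h
      rw [h] at hspec
      have h00 : (∑' n, x (p+1+0+n)) = ∑' n, x (p+1+n) :=
        tsum_congr fun n => congrArg x (by omega)
      rw [h00] at hspec
      linarith
    have hmin : ¬ (∑' n, x (p+1+(Q-1)+n) < b - f k) := Nat.find_min hP (by omega)
    push_neg at hmin
    have hshift : ∑' n, x (p+1+(Q-1)+n) = x (p+1+(Q-1)) + ∑' n, x (p+1+Q+n) := by
      have e1 : x (p+1+(Q-1)+0) = x (p+1+(Q-1)) := by norm_num
      have e2 : (∑' n, x (p+1+(Q-1)+(n+1))) = ∑' n, x (p+1+Q+n) :=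
        tsum_congr fun n => congrArg x (by omega)
      rw [Summable.tsum_eq_zero_add (aux_tail_summable x hsum (p+1+(Q-1))), e1, e2]
    have hxQ : x (p+1+(Q-1)) < b - a := hsmall _ (by omega)
    have hlow : a < f k + ∑' n, x (p+1+Q+n) := by
      have : b - f k ≤ x (p+1+(Q-1)) + ∑' n, x (p+1+Q+n) := by
        rw [← hshift]; exact hmin
      linarith
    have hhigh : f k + ∑' n, x (p+1+Q+n) < b := by linarith
    rcases hgap' _ (hmemq Q) with h | h
    · linarith
    · linarith
  exact ⟨i, heq, by rw [hat, hi]⟩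
end

section
/- Longest-gap-from-the-left lemma: Let (x_n) be a nonincreasing summable sequence of positive reals and suppose (a,b) is a gap in E(x_n) such that every gap (a₁,b₁) of E(x_n) with b₁ < a satisfies b₁ − a₁ < b − a. Then b = x_k for some k, and a = r_k = Σ_{n>k} x_n. -/
/-!
Write `E` for the achievement set and `d = b - a`. The key observation (`IsRecordGap.sum_add_lt`):
if `c ≤ a` is a finite sum of terms that are all at least some `y ∈ E` with `y < b`, then
`c + y < b`. Otherwise the window `(a - c, b - c)`, of length `d` and lying below `y`, meets `E`
(by compactness a window missing `E` lies in a gap of length `≥ d` to the left of `(a, b)`), and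
a point `u ∈ E` of it has only terms smaller than those of `c`, so `c + u ∈ E ∩ (a, b)`.

Dropping a term of `b` cannot land in `(a, b)`, so every term of `b` is at least `d` and `b` is a
finite sum; the observation with `y` its smallest term shows that `b = x k` is a single term.
For the last index `k` with `x k = b`, all terms of `a` come after `k`, so `a ≤ r_k`; and the first
partial sum `x (k+1) + ⋯ + x N` exceeding `a` contradicts the observation with `y = x N`.
-/

open Set Filter Topology

noncomputable def subsum (x : ℕ → ℝ) (ε : ℕ → Bool) : ℝ :=
  ∑' n, if ε n then x n else 0

lemma le_of_Ioo_inter_eq_empty {K : Set ℝ} {a b y : ℝ} (h : Ioo a b ∩ K = ∅) (hy : y ∈ K)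
    (hyb : y < b) : y ≤ a :=
  not_lt.1 fun hay => eq_empty_iff_forall_notMem.1 h y ⟨⟨hay, hyb⟩, hy⟩

lemma IsCompact.exists_gap_superset {K : Set ℝ} (hK : IsCompact K) {p q : ℝ}
    (hpq : Ioo p q ∩ K = ∅) (hp : (K ∩ Iic p).Nonempty) (hq : (K ∩ Ici q).Nonempty) :
    ∃ a₁ b₁, IsGreatest (K ∩ Iic p) a₁ ∧ IsLeast (K ∩ Ici q) b₁ ∧ Ioo a₁ b₁ ∩ K = ∅ := by
  obtain ⟨a₁, ha₁⟩ := (hK.inter_right isClosed_Iic).exists_isGreatest hp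
  obtain ⟨b₁, hb₁⟩ := (hK.inter_right isClosed_Ici).exists_isLeast hq
  refine ⟨a₁, b₁, ha₁, hb₁, eq_empty_iff_forall_notMem.2 ?_⟩
  rintro y ⟨⟨hay, hyb⟩, hy⟩
  rcases le_or_gt y p with hyp | hpy
  · exact (ha₁.2 ⟨hy, hyp⟩).not_gt hay
  rcases le_or_gt q y with hqy | hyq
  · exact (hb₁.2 ⟨hy, hqy⟩).not_gt hyb
  exact eq_empty_iff_forall_notMem.1 hpq y ⟨⟨hpy, hyq⟩, hy⟩

lemma Filter.Tendsto.finite_setOf_le {α : Type*} {x : α → ℝ} (hx : Tendsto x cofinite (𝓝 0))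
    {c : ℝ} (hc : 0 < c) : {n | c ≤ x n}.Finite := by
  simpa using eventually_cofinite.1 (hx.eventually (gt_mem_nhds hc))

lemma Antitone.exists_last_eq {x : ℕ → ℝ} (hmono : Antitone x) (hsum : Summable x) {k₀ : ℕ}
    (hk₀ : 0 < x k₀) : ∃ k, x k = x k₀ ∧ ∀ n, k < n → x n < x k₀ := by
  obtain ⟨k, hk, hmax⟩ :=
    exists_max_image _ id (hsum.tendsto_cofinite_zero.finite_setOf_le hk₀) ⟨k₀, le_refl (x k₀)⟩
  refine ⟨k, le_antisymm (hmono (hmax k₀ (le_refl (x k₀)))) hk, fun n hn => ?_⟩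
  by_contra! h
  exact (hmax n h).not_gt hn

section subsum

variable {x : ℕ → ℝ}

lemma mem_achievementSet_iff {y : ℝ} : y ∈ achievementSet x ↔ ∃ ε, y = subsum x ε := Iff.rfl

lemma subsum_mem_achievementSet (ε : ℕ → Bool) : subsum x ε ∈ achievementSet x := ⟨ε, rfl⟩

lemma Summable.ite_bool (hsum : Summable x) (ε : ℕ → Bool) :
    Summable fun n => if ε n then x n else 0 :=
  (hsum.indicator {n | ε n}).congr fun n => by simp [Set.indicator]

lemma subsum_decide_mem (S : Finset ℕ) :
    subsum x (fun n => decide (n ∈ S)) = ∑ n ∈ S, x n := by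
  rw [subsum, tsum_eq_sum (s := S) fun n hn => by simp [hn]]
  exact Finset.sum_congr rfl fun n hn => by simp [hn]

lemma sum_mem_achievementSet (S : Finset ℕ) : ∑ n ∈ S, x n ∈ achievementSet x :=
  ⟨_, (subsum_decide_mem S).symm⟩

lemma mem_achievementSet (i : ℕ) : x i ∈ achievementSet x := by
  simpa using sum_mem_achievementSet (x := x) {i}

lemma zero_mem_achievementSet : (0 : ℝ) ∈ achievementSet x := by
  simpa using sum_mem_achievementSet (x := x) ∅

lemma nonneg_of_mem_achievementSet (hx : ∀ n, 0 ≤ x n) {y : ℝ} (hy : y ∈ achievementSet x) :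
    0 ≤ y := by
  obtain ⟨ε, rfl⟩ := mem_achievementSet_iff.1 hy
  exact tsum_nonneg fun n => by split_ifs <;> simp [hx n]

lemma subsum_mono (hx : ∀ n, 0 ≤ x n) (hsum : Summable x) {ε₁ ε₂ : ℕ → Bool}
    (h : ∀ n, ε₁ n → ε₂ n) : subsum x ε₁ ≤ subsum x ε₂ :=
  (hsum.ite_bool ε₁).tsum_le_tsum (fun n => by
    cases h₁ : ε₁ n <;> cases h₂ : ε₂ n <;> simp_all [hx n]) (hsum.ite_bool ε₂)

lemma le_subsum (hx : ∀ n, 0 ≤ x n) (hsum : Summable x) {ε : ℕ → Bool} {i : ℕ} (hi : ε i) :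
    x i ≤ subsum x ε := by
  have h := subsum_mono hx hsum (ε₁ := fun n => decide (n ∈ ({i} : Finset ℕ))) (ε₂ := ε)
    fun n hn => by simp_all
  rwa [subsum_decide_mem, Finset.sum_singleton] at h

lemma subsum_update (hsum : Summable x) (ε : ℕ → Bool) (i : ℕ) (c : Bool) :
    subsum x (Function.update ε i c)
      = subsum x ε - (if ε i then x i else 0) + (if c then x i else 0) := by
  have key : subsum x (Function.update ε i c) - subsum x ε
      = (if c then x i else 0) - (if ε i then x i else 0) := by
    rw [subsum, subsum, ← (hsum.ite_bool _).tsum_sub (hsum.ite_bool _), tsum_eq_single i]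
    · simp
    · intro n hn
      simp [Function.update_of_ne hn]
  linarith

lemma sub_mem_achievementSet (hsum : Summable x) {ε : ℕ → Bool} {i : ℕ} (hi : ε i) :
    subsum x ε - x i ∈ achievementSet x := by
  simpa [subsum_update hsum, hi] using
    subsum_mem_achievementSet (x := x) (Function.update ε i false)

lemma add_mem_achievementSet (hsum : Summable x) {ε : ℕ → Bool} {i : ℕ} (hi : ε i = false) :
    subsum x ε + x i ∈ achievementSet x := by
  simpa [subsum_update hsum, hi] using
    subsum_mem_achievementSet (x := x) (Function.update ε i true)

lemma sum_add_mem_achievementSet (hx : ∀ n, 0 ≤ x n) (hsum : Summable x) (S : Finset ℕ) {u : ℝ}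
    (hu : u ∈ achievementSet x) (hS : ∀ n ∈ S, u < x n) :
    ∑ n ∈ S, x n + u ∈ achievementSet x := by
  obtain ⟨ε, rfl⟩ := mem_achievementSet_iff.1 hu
  have hdisj : ∀ n ∈ S, ε n = false := fun n hn => by
    by_contra hε
    exact (hS n hn).not_ge (le_subsum hx hsum (by simpa using hε))
  refine mem_achievementSet_iff.2 ⟨fun n => decide (n ∈ S) || ε n, ?_⟩
  rw [← subsum_decide_mem, subsum, subsum, subsum,
    ← (hsum.ite_bool _).tsum_add (hsum.ite_bool _)]
  exact tsum_congr fun n => by by_cases hn : n ∈ S <;> simp [hn, hdisj]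

lemma subsum_decide_lt (hsum : Summable x) (k : ℕ) :
    subsum x (fun n => decide (k < n)) = ∑' n, x (k + 1 + n) := by
  have h := (hsum.ite_bool fun n => decide (k < n)).sum_add_tsum_nat_add (k + 1)
  rw [Finset.sum_eq_zero fun i hi => by simp at hi ⊢; omega] at h
  rw [subsum, ← h, zero_add]
  exact tsum_congr fun i => by rw [if_pos (by simp; omega), add_comm]

lemma isCompact_achievementSet (hx : ∀ n, 0 ≤ x n) (hsum : Summable x) :
    IsCompact (achievementSet x) := by
  have : achievementSet x = range (subsum x) := by
    ext
    simp [mem_achievementSet_iff, eq_comm]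
  rw [this]
  refine isCompact_range (continuous_tsum (fun n => ?_) hsum fun n ε => ?_)
  · exact (continuous_of_discreteTopology (f := fun c : Bool => if c then x n else 0)).comp
      (continuous_apply n)
  · split_ifs <;> simp [abs_of_nonneg (hx n), hx n]

end subsum

lemma exists_mem_Ioo_sub_of_gap {x : ℕ → ℝ} (hpos : ∀ n, 0 < x n) (hsum : Summable x)
    {a b δ : ℝ} (hab : a < b) (ha : a ∈ achievementSet x)
    (hgap : Ioo a b ∩ achievementSet x = ∅) (hδ : 0 < δ) :
    ∃ y ∈ achievementSet x, y ∈ Ioo (a - δ) a := by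
  obtain ⟨n, hn⟩ :=
    (hsum.tendsto_cofinite_zero.finite_setOf_le (lt_min hδ (sub_pos.2 hab))).exists_notMem
  obtain ⟨hnδ, hnd⟩ : x n < δ ∧ x n + a < b := by simpa using hn
  obtain ⟨ε, rfl⟩ := mem_achievementSet_iff.1 ha
  cases hε : ε n
  · have := le_of_Ioo_inter_eq_empty hgap (add_mem_achievementSet hsum hε) (by linarith)
    linarith [hpos n]
  · exact ⟨_, sub_mem_achievementSet hsum hε, by linarith, by linarith [hpos n]⟩

lemma exists_finset_sum_eq_of_gap {x : ℕ → ℝ} (hpos : ∀ n, 0 < x n) (hsum : Summable x)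
    {a b : ℝ} (hab : a < b) (hb : b ∈ achievementSet x)
    (hgap : Ioo a b ∩ achievementSet x = ∅) : ∃ T : Finset ℕ, b = ∑ n ∈ T, x n := by
  obtain ⟨ε, rfl⟩ := mem_achievementSet_iff.1 hb
  have hbig : {n | ε n} ⊆ {n | subsum x ε - a ≤ x n} := fun n (hn : ε n) =>
    show subsum x ε - a ≤ x n by
      linarith [le_of_Ioo_inter_eq_empty hgap (sub_mem_achievementSet hsum hn)
        (by linarith [hpos n])]
  have hfin := (hsum.tendsto_cofinite_zero.finite_setOf_le (sub_pos.2 hab)).subset hbig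
  refine ⟨hfin.toFinset, ?_⟩
  rw [← subsum_decide_mem]
  congr
  funext n
  simp

lemma le_tail_of_lt {x : ℕ → ℝ} (hx : ∀ n, 0 ≤ x n) (hsum : Summable x) (hmono : Antitone x)
    {a : ℝ} {k : ℕ} (ha : a ∈ achievementSet x) (hak : a < x k) : a ≤ ∑' n, x (k + 1 + n) := by
  obtain ⟨ε, rfl⟩ := mem_achievementSet_iff.1 ha
  rw [← subsum_decide_lt hsum]
  refine subsum_mono hx hsum fun n hn => decide_eq_true (lt_of_not_ge fun hnk => ?_)
  exact (hak.trans_le (hmono hnk)).not_ge (le_subsum hx hsum hn)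

structure IsRecordGap (x : ℕ → ℝ) (a b : ℝ) : Prop where
  lt : a < b
  left_mem : a ∈ achievementSet x
  right_mem : b ∈ achievementSet x
  inter_eq_empty : Ioo a b ∩ achievementSet x = ∅
  longer : ∀ a₁ b₁ : ℝ, a₁ < b₁ → a₁ ∈ achievementSet x → b₁ ∈ achievementSet x →
    Ioo a₁ b₁ ∩ achievementSet x = ∅ → b₁ < a → b₁ - a₁ < b - a

namespace IsRecordGap

variable {x : ℕ → ℝ} {a b : ℝ}

lemma sub_lt (h : IsRecordGap x a b) (hpos : ∀ n, 0 < x n) (hsum : Summable x) {u v : ℝ}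
    (huv : u < v) (hu : u ∈ achievementSet x) (hv : v ∈ achievementSet x)
    (hgap : Ioo u v ∩ achievementSet x = ∅) (hvb : v < b) : v - u < b - a := by
  rcases (le_of_Ioo_inter_eq_empty h.inter_eq_empty hv hvb).lt_or_eq with hva | rfl
  · exact h.longer u v huv hu hv hgap hva
  -- A gap ending at `a` is short: `E` accumulates at `a` from the left.
  by_contra! hwide
  obtain ⟨y, hy, hy₁, hy₂⟩ := exists_mem_Ioo_sub_of_gap hpos hsum h.lt h.left_mem
    h.inter_eq_empty (sub_pos.2 h.lt)
  exact eq_empty_iff_forall_notMem.1 hgap y ⟨⟨by linarith, hy₂⟩, hy⟩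

lemma Ioo_inter_nonempty (h : IsRecordGap x a b) (hpos : ∀ n, 0 < x n) (hsum : Summable x)
    {p q y : ℝ} (hp : 0 ≤ p) (hpq : b - a ≤ q - p) (hy : y ∈ achievementSet x) (hqy : q ≤ y)
    (hyb : y < b) : (Ioo p q ∩ achievementSet x).Nonempty := by
  by_contra hempty
  obtain ⟨a₁, b₁, ha₁, hb₁, hgap⟩ :=
    (isCompact_achievementSet (fun n => (hpos n).le) hsum).exists_gap_superset
      (not_nonempty_iff_eq_empty.1 hempty) ⟨0, zero_mem_achievementSet, hp⟩ ⟨y, hy, hqy⟩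
  have ha₁p : a₁ ≤ p := ha₁.1.2
  have hqb₁ : q ≤ b₁ := hb₁.1.2
  have hb₁y : b₁ ≤ y := hb₁.2 ⟨hy, hqy⟩
  have := h.sub_lt hpos hsum (by linarith [h.lt]) ha₁.1.1 hb₁.1.1 hgap (by linarith)
  linarith

lemma sum_add_lt (h : IsRecordGap x a b) (hpos : ∀ n, 0 < x n) (hsum : Summable x)
    {S : Finset ℕ} {y : ℝ} (hS : ∑ n ∈ S, x n ≤ a) (hy : y ∈ achievementSet x) (hyb : y < b)
    (hyS : ∀ n ∈ S, y ≤ x n) : ∑ n ∈ S, x n + y < b := by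
  by_contra! hby
  obtain ⟨u, ⟨hu₁, hu₂⟩, hu⟩ := h.Ioo_inter_nonempty hpos hsum (p := a - ∑ n ∈ S, x n)
    (q := b - ∑ n ∈ S, x n) (by linarith) (by linarith) hy (by linarith) hyb
  have hmem := sum_add_mem_achievementSet (fun n => (hpos n).le) hsum S hu
    fun n hn => by linarith [hyS n hn]
  exact eq_empty_iff_forall_notMem.1 h.inter_eq_empty _ ⟨⟨by linarith, by linarith⟩, hmem⟩

lemma exists_eq_term (h : IsRecordGap x a b) (hpos : ∀ n, 0 < x n) (hsum : Summable x)
    {T : Finset ℕ} (hT : b = ∑ n ∈ T, x n) : ∃ k, b = x k := by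
  have hb : 0 < b :=
    (nonneg_of_mem_achievementSet (fun n => (hpos n).le) h.left_mem).trans_lt h.lt
  obtain ⟨k, hk, hmin⟩ :=
    T.exists_min_image x (Finset.nonempty_of_sum_ne_zero (f := x) (by linarith))
  have hsplit := T.sum_erase_add x hk
  refine ⟨k, ?_⟩
  obtain hempty | hne := (T.erase k).eq_empty_or_nonempty
  · simpa [hempty, ← hT] using hsplit.symm
  have hpos_erase := Finset.sum_pos (fun n _ => hpos n) hne
  have hc : ∑ n ∈ T.erase k, x n ≤ a :=
    le_of_Ioo_inter_eq_empty h.inter_eq_empty (sum_mem_achievementSet _) (by linarith [hpos k])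
  have := h.sum_add_lt hpos hsum hc (mem_achievementSet k) (by linarith)
    fun n hn => hmin n (Finset.mem_of_mem_erase hn)
  linarith

lemma tail_le (h : IsRecordGap x a b) (hpos : ∀ n, 0 < x n) (hsum : Summable x)
    (hmono : Antitone x) {k : ℕ} (hlt : ∀ n, k < n → x n < b) :
    ∑' n, x (k + 1 + n) ≤ a := by
  by_contra! hr
  have hP : ∃ N, a < ∑ n ∈ Finset.Ico (k + 1) (k + 1 + N), x n := by
    simp only [Finset.sum_Ico_eq_sum_range, add_tsub_cancel_left]
    exact ((hsum.comp_injective (add_right_injective (k + 1))).hasSum.tendsto_sum_nat.eventually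
      (lt_mem_nhds hr)).exists
  have ha : 0 ≤ a := nonneg_of_mem_achievementSet (fun n => (hpos n).le) h.left_mem
  obtain ⟨M, hM⟩ : ∃ M, Nat.find hP = M + 1 :=
    Nat.exists_eq_succ_of_ne_zero fun h0 => by simpa [h0, not_lt.2 ha] using Nat.find_spec hP
  have hc : ∑ n ∈ Finset.Ico (k + 1) (k + 1 + M), x n ≤ a :=
    not_lt.1 (Nat.find_min hP (by omega))
  have hcy : b ≤ ∑ n ∈ Finset.Ico (k + 1) (k + 1 + M), x n + x (k + 1 + M) := by
    have hN := Nat.find_spec hP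
    rw [hM, ← add_assoc, Finset.sum_Ico_succ_top (by omega)] at hN
    have hmem : ∑ n ∈ Finset.Ico (k + 1) (k + 1 + M), x n + x (k + 1 + M)
        ∈ achievementSet x := by
      rw [← Finset.sum_Ico_succ_top (by omega)]
      exact sum_mem_achievementSet _
    by_contra! hlt'
    linarith [le_of_Ioo_inter_eq_empty h.inter_eq_empty hmem hlt']
  have := h.sum_add_lt hpos hsum hc (mem_achievementSet _) (hlt _ (by omega))
    fun n hn => hmono (Finset.mem_Ico.1 hn).2.le
  linarith

end IsRecordGap

theorem stmt_10 (x : ℕ → ℝ) (hmono : Antitone x) (hpos : ∀ n, 0 < x n)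
    (hsum : Summable x)
    (a b : ℝ) (hab : a < b)
    (ha : a ∈ achievementSet x) (hb : b ∈ achievementSet x)
    (hgap : Set.Ioo a b ∩ achievementSet x = ∅)
    (hleft : ∀ a₁ b₁ : ℝ, a₁ < b₁ → a₁ ∈ achievementSet x → b₁ ∈ achievementSet x →
      Set.Ioo a₁ b₁ ∩ achievementSet x = ∅ → b₁ < a → b₁ - a₁ < b - a) :
    ∃ k : ℕ, b = x k ∧ a = ∑' n, x (k + 1 + n) := by
  have h : IsRecordGap x a b := ⟨hab, ha, hb, hgap, hleft⟩
  obtain ⟨T, hT⟩ := exists_finset_sum_eq_of_gap hpos hsum hab hb hgap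
  obtain ⟨k₀, rfl⟩ := h.exists_eq_term hpos hsum hT
  obtain ⟨k, hk, hlast⟩ := hmono.exists_last_eq hsum (hpos k₀)
  refine ⟨k, hk.symm, le_antisymm ?_ (h.tail_le hpos hsum hmono hlast)⟩
  exact le_tail_of_lt (fun n => (hpos n).le) hsum hmono ha (hk ▸ hab)
end

section
/- For q ≥ 1/2 with q < 1, the achievement set E(q^n) of the geometric sequence (q, q², q³, …) equals the interval [0, q/(1−q)]. -/
open Filter Topology

section Kakeya

variable {x : ℕ → ℝ}

theorem summable_ite_of_nonneg (h0 : ∀ n, 0 ≤ x n) (hx : Summable x) (ε : ℕ → Bool) :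
    Summable fun n => if ε n then x n else 0 :=
  hx.of_nonneg_of_le (fun n => by split <;> simp [h0]) (fun n => by split <;> simp [h0])

theorem achievementSet_subset_Icc (h0 : ∀ n, 0 ≤ x n) (hx : Summable x) :
    achievementSet x ⊆ Set.Icc 0 (∑' n, x n) := by
  rintro _ ⟨ε, rfl⟩
  have hle : ∀ n, (if ε n then x n else 0) ≤ x n := fun n => by split <;> simp [h0]
  exact ⟨tsum_nonneg fun n => by split <;> simp [h0],
    (summable_ite_of_nonneg h0 hx ε).tsum_le_tsum hle hx⟩

noncomputable def greedyRemainder (x : ℕ → ℝ) (y : ℝ) : ℕ → ℝ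
  | 0 => y
  | n + 1 => if x n ≤ greedyRemainder x y n then greedyRemainder x y n - x n
      else greedyRemainder x y n

theorem sum_range_greedy_add_greedyRemainder (y : ℝ) (n : ℕ) :
    ∑ k ∈ Finset.range n, (if x k ≤ greedyRemainder x y k then x k else 0)
      + greedyRemainder x y n = y := by
  induction n with
  | zero => simp [greedyRemainder]
  | succ n ih =>
    rw [Finset.sum_range_succ, greedyRemainder]
    split_ifs <;> linarith

theorem tsum_nat_add_eq_add_tsum_nat_add (hx : Summable x) (n : ℕ) :
    ∑' k, x (k + n) = x n + ∑' k, x (k + (n + 1)) := by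
  simpa [add_assoc, add_comm 1] using ((summable_nat_add_iff n).mpr hx).tsum_eq_zero_add

theorem greedyRemainder_mem_Icc (hx : Summable x) (hK : ∀ n, x n ≤ ∑' k, x (k + (n + 1)))
    {y : ℝ} (hy : y ∈ Set.Icc 0 (∑' n, x n)) (n : ℕ) :
    greedyRemainder x y n ∈ Set.Icc 0 (∑' k, x (k + n)) := by
  induction n with
  | zero => simpa [greedyRemainder] using hy
  | succ n ih =>
    have htail := tsum_nat_add_eq_add_tsum_nat_add hx n
    rw [greedyRemainder]
    split_ifs
    · constructor <;> linarith [ih.2]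
    · constructor <;> linarith [ih.1, hK n]

theorem Icc_subset_achievementSet (h0 : ∀ n, 0 ≤ x n) (hx : Summable x)
    (hK : ∀ n, x n ≤ ∑' k, x (k + (n + 1))) :
    Set.Icc 0 (∑' n, x n) ⊆ achievementSet x := by
  intro y hy
  refine ⟨fun n => decide (x n ≤ greedyRemainder x y n), ?_⟩
  have hrem : Tendsto (greedyRemainder x y) atTop (𝓝 0) :=
    squeeze_zero (fun n => (greedyRemainder_mem_Icc hx hK hy n).1)
      (fun n => (greedyRemainder_mem_Icc hx hK hy n).2) (tendsto_sum_nat_add x)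
  have hpartial : Tendsto (fun n => ∑ k ∈ Finset.range n,
      (if x k ≤ greedyRemainder x y k then x k else 0)) atTop (𝓝 y) := by
    have := (tendsto_const_nhds (x := y)).sub hrem
    rw [sub_zero] at this
    exact this.congr fun n => (eq_sub_of_add_eq (sum_range_greedy_add_greedyRemainder y n)).symm
  refine (HasSum.tsum_eq ?_).symm
  simpa using (hasSum_iff_tendsto_nat_of_nonneg (fun n => by split <;> simp [h0]) y).mpr hpartial

/-- Kakeya's theorem. -/
theorem achievementSet_eq_Icc_of_le_tsum_nat_add (h0 : ∀ n, 0 ≤ x n) (hx : Summable x)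
    (hK : ∀ n, x n ≤ ∑' k, x (k + (n + 1))) :
    achievementSet x = Set.Icc 0 (∑' n, x n) :=
  (achievementSet_subset_Icc h0 hx).antisymm (Icc_subset_achievementSet h0 hx hK)

end Kakeya

theorem tsum_pow_add_of_lt_one {q : ℝ} (hq0 : 0 ≤ q) (hq1 : q < 1) (n : ℕ) :
    ∑' k, q ^ (k + n) = q ^ n / (1 - q) := by
  simp_rw [pow_add, tsum_mul_right, tsum_geometric_of_lt_one hq0 hq1, div_eq_inv_mul]

theorem stmt_12 (q : ℝ) (hq1 : 1/2 ≤ q) (hq2 : q < 1) :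
    achievementSet (fun n => q ^ (n + 1)) = Set.Icc 0 (q / (1 - q)) := by
  have hq0 : 0 ≤ q := by linarith
  have htail := tsum_pow_add_of_lt_one hq0 hq2
  have hsum : Summable fun n => q ^ (n + 1) :=
    (summable_nat_add_iff 1).mpr (summable_geometric_of_lt_one hq0 hq2)
  convert achievementSet_eq_Icc_of_le_tsum_nat_add (fun n => by positivity) hsum ?_ using 2
  · simpa using (htail 1).symm
  · intro n
    simp only [add_assoc, htail]
    rw [le_div_iff₀ (by linarith), ← add_assoc, pow_succ _ (n + 1)]
    exact mul_le_mul_of_nonneg_left (by linarith) (by positivity)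
end

section
/- If X = E(x_n) is the achievement set of a summable sequence (x_n) of positive reals, then every term x_n belongs to the center of distances of X, i.e., for every n and every x ∈ X there exists y ∈ X with |x − y| = x_n. -/
theorem stmt_15 (x : ℕ → ℝ) (hpos : ∀ n, 0 < x n) (hsum : Summable x) :
    ∀ n : ℕ, ∀ z ∈ achievementSet x, ∃ y ∈ achievementSet x, |z - y| = x n := by
  intro n z hz
  obtain ⟨ε, rfl⟩ := hz
  set ε' : ℕ → Bool := Function.update ε n (!ε n) with hε'
  have hsummable : ∀ δ : ℕ → Bool, Summable (fun m => if δ m then x m else 0) := by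
    intro δ
    apply Summable.of_nonneg_of_le (fun m => ?_) (fun m => ?_) hsum
    · split <;> simp [le_of_lt (hpos m)]
    · split <;> simp [le_of_lt (hpos m)]
  refine ⟨∑' m, if ε' m then x m else 0, ⟨ε', rfl⟩, ?_⟩
  have h1 := Summable.tsum_eq_add_tsum_ite (hsummable ε) n
  have h2 := Summable.tsum_eq_add_tsum_ite (hsummable ε') n
  have hrest : (∑' m, if m = n then 0 else if ε m then x m else 0)
      = ∑' m, if m = n then 0 else if ε' m then x m else 0 := by
    apply tsum_congr
    intro m
    by_cases hm : m = n
    · simp [hm]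
    · simp [hε', Function.update_of_ne hm]
  have hεn : ε' n = !ε n := by simp [hε']
  cases h : ε n with
  | true =>
    rw [h1, h2, hrest, h, hεn, h]
    simp [abs_of_nonneg (le_of_lt (hpos n))]
  | false =>
    rw [h1, h2, hrest, h, hεn, h]
    simp [abs_of_nonpos (neg_nonpos.mpr (le_of_lt (hpos n))), hpos]
end
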